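/- Let z ∈ Â be a causal vector at which the fundamental tensor g_z is nondegenerate, and let W ⊆ V be a linear subspace all of whose nonzero vectors are spacelike (W ∩ (Â ∪ (−Â)) = ∅) and which is g_z-orthogonal to z, i.e. g_z(z,w) = 0 for all w ∈ W. Then the restriction of g_z to W × W is nondegenerate; in fact it is negative definite (this is Lemma 5.1: the fundamental tensor of a causal vector orthogonal to a spacelike subspace restricts nondegenerately to it). -/

import Mathlib

open Set Filter Topology

private lemma contAt_clm_apply {X : Type*} [TopologicalSpace X]
    {E F : Type*} [NormedAddCommGroup E] [NormedSpace ℝ E]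
    [NormedAddCommGroup F] [NormedSpace ℝ F]
    {f : X → E →L[ℝ] F} {g : X → E} {x : X}
    (hf : ContinuousAt f x) (hg : ContinuousAt g x) :
    ContinuousAt (fun y => f y (g y)) x :=
  (isBoundedBilinearMap_apply (𝕜 := ℝ)).continuous.continuousAt.comp (hf.prodMk hg)

private lemma sqrtL_concave {V : Type} [NormedAddCommGroup V] [NormedSpace ℝ V]
    (A : Set V) (hA_conv : Convex ℝ A)
    (hA_cone : ∀ v ∈ A, ∀ t : ℝ, 0 < t → t • v ∈ A)
    (L : V → ℝ)
    (hL_homogA : ∀ v ∈ A, ∀ t : ℝ, 0 < t → L (t • v) = t ^ 2 * L v)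
    (hL_pos : ∀ v ∈ A, 0 < L v)
    (hL_conv : Convex ℝ {v ∈ A | 1 ≤ L v}) :
    ConcaveOn ℝ A (fun v => Real.sqrt (L v)) := by
  refine ⟨hA_conv, ?_⟩
  intro u hu v hv s t hs ht hst
  rcases eq_or_lt_of_le hs with rfl | hs'
  · simp at hst; simp [hst]
  rcases eq_or_lt_of_le ht with rfl | ht'
  · simp at hst; simp [hst]
  set a := Real.sqrt (L u) with ha
  set b := Real.sqrt (L v) with hb
  have hLa := hL_pos u hu
  have hLb := hL_pos v hv
  have ha0 : 0 < a := Real.sqrt_pos.2 hLa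
  have hb0 : 0 < b := Real.sqrt_pos.2 hLb
  have ha2 : a ^ 2 = L u := Real.sq_sqrt hLa.le
  have hb2 : b ^ 2 = L v := Real.sq_sqrt hLb.le
  set m := s * a + t * b with hm
  have hm0 : 0 < m := by positivity
  have hu' : a⁻¹ • u ∈ {v ∈ A | 1 ≤ L v} := by
    refine ⟨hA_cone u hu _ (by positivity), ?_⟩
    rw [hL_homogA u hu _ (by positivity)]
    rw [← ha2]; field_simp; exact le_rfl
  have hv' : b⁻¹ • v ∈ {v ∈ A | 1 ≤ L v} := by
    refine ⟨hA_cone v hv _ (by positivity), ?_⟩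
    rw [hL_homogA v hv _ (by positivity)]
    rw [← hb2]; field_simp; exact le_rfl
  have hc1 : (0:ℝ) ≤ s * a / m := by positivity
  have hc2 : (0:ℝ) ≤ t * b / m := by positivity
  have hc3 : s * a / m + t * b / m = 1 := by field_simp; exact hm.symm
  have hp := hL_conv hu' hv' hc1 hc2 hc3
  have hpe : (s * a / m) • (a⁻¹ • u) + (t * b / m) • (b⁻¹ • v)
      = m⁻¹ • (s • u + t • v) := by
    rw [smul_smul, smul_smul, smul_add, smul_smul, smul_smul]
    congr 2
    · field_simp
    · field_simp
  rw [hpe] at hp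
  obtain ⟨hpA, hpL⟩ := hp
  have hsum : s • u + t • v = m • (m⁻¹ • (s • u + t • v)) := by
    rw [smul_smul]; field_simp; rw [one_smul]
  have hLge : m ^ 2 ≤ L (s • u + t • v) := by
    rw [hsum, hL_homogA _ hpA m hm0]
    nlinarith [hpL, sq_nonneg m]
  calc s • Real.sqrt (L u) + t • Real.sqrt (L v) = m := by simp [hm, ha, hb, smul_eq_mul]
    _ = Real.sqrt (m ^ 2) := by rw [Real.sqrt_sq hm0.le]
    _ ≤ Real.sqrt (L (s • u + t • v)) := Real.sqrt_le_sqrt hLge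


private lemma key_ineq {V : Type} [NormedAddCommGroup V] [NormedSpace ℝ V]
    (A : Set V) (hA_open : IsOpen A) (hA_conv : Convex ℝ A)
    (L : V → ℝ)
    (hsm : ∀ v ∈ A, ContDiffAt ℝ (⊤ : ℕ∞) L v)
    (hpos : ∀ v ∈ A, 0 < L v)
    (hconc : ConcaveOn ℝ A (fun v => Real.sqrt (L v)))
    {v : V} (hv : v ∈ A) (x : V) :
    2 * (fderiv ℝ (fderiv ℝ L) v x x) * L v ≤ (fderiv ℝ L v x) ^ 2 := by
  by_contra hcon
  push_neg at hcon
  set γ : ℝ → V := fun t => v + t • x with hγ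
  have hγc : Continuous γ := by fun_prop
  have hγ0 : γ 0 = v := by simp [hγ]
  set f : ℝ → ℝ := fun t => L (γ t) with hf
  set f1 : ℝ → ℝ := fun t => fderiv ℝ L (γ t) x with hf1
  set f2 : ℝ → ℝ := fun t => fderiv ℝ (fderiv ℝ L) (γ t) x x with hf2
  -- continuity of f, f1, f2 at points where γ t ∈ A
  have hFc : ∀ t : ℝ, γ t ∈ A → ContinuousAt f1 t := by
    intro t ht
    exact (isBoundedBilinearMap_apply (𝕜 := ℝ)).continuous.continuousAt.comp
      (ContinuousAt.prodMk
        ((((hsm _ ht).fderiv_right (m := (⊤ : ℕ∞)) (by simp)).continuousAt).comp hγc.continuousAt)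
        continuousAt_const)
  have hBc : ∀ t : ℝ, γ t ∈ A → ContinuousAt f2 t := by
    intro t ht
    have h1 : ContinuousAt (fun t => fderiv ℝ (fderiv ℝ L) (γ t) x) t :=
      (isBoundedBilinearMap_apply (𝕜 := ℝ)).continuous.continuousAt.comp
        (ContinuousAt.prodMk
          ((((((hsm _ ht).fderiv_right (m := (⊤ : ℕ∞)) (by simp)).fderiv_right (m := (⊤ : ℕ∞)) (by simp))).continuousAt).comp
            hγc.continuousAt)
          continuousAt_const)
    exact (isBoundedBilinearMap_apply (𝕜 := ℝ)).continuous.continuousAt.comp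
      (ContinuousAt.prodMk h1 continuousAt_const)
  have hfc : ∀ t : ℝ, γ t ∈ A → ContinuousAt f t := fun t ht =>
    ((hsm _ ht).continuousAt).comp hγc.continuousAt
  -- eventual neighborhood where everything is fine
  have hev : ∀ᶠ t in 𝓝 (0:ℝ), γ t ∈ A ∧ (f1 t) ^ 2 < 2 * f2 t * f t := by
    have h1 : ∀ᶠ t in 𝓝 (0:ℝ), γ t ∈ A :=
      hγc.continuousAt (by rw [hγ0]; exact hA_open.mem_nhds hv)
    have h2 : ContinuousAt (fun t => 2 * f2 t * f t - (f1 t) ^ 2) 0 := by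
      have := hBc 0 (by rwa [hγ0]); have := hfc 0 (by rwa [hγ0]); have := hFc 0 (by rwa [hγ0])
      fun_prop
    have h20 : (0:ℝ) < 2 * f2 0 * f 0 - (f1 0) ^ 2 := by
      simp only [hf, hf1, hf2, hγ0]; linarith
    have h3 := h2.eventually_mem (isOpen_Ioi.mem_nhds h20)
    filter_upwards [h1, h3] with t ht1 ht2
    exact ⟨ht1, by simpa [sub_pos] using ht2⟩
  obtain ⟨δ, hδ0, hδ⟩ := Metric.eventually_nhds_iff_ball.1 hev
  set D := Ioo (-δ) δ with hD
  have hDsub : ∀ t ∈ D, γ t ∈ A ∧ (f1 t) ^ 2 < 2 * f2 t * f t := by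
    intro t ht
    exact hδ t (by simpa [Real.ball_eq_Ioo, hD] using ht)
  -- derivatives
  have hγd : ∀ t : ℝ, HasDerivAt γ x t := by
    intro t
    simpa [hγ] using ((hasDerivAt_id t).smul_const x).const_add v
  have hfd : ∀ t ∈ D, HasDerivAt f (f1 t) t := by
    intro t ht
    have hL : HasFDerivAt L (fderiv ℝ L (γ t)) (γ t) :=
      ((hsm _ (hDsub t ht).1).differentiableAt (by simp)).hasFDerivAt
    exact hL.comp_hasDerivAt t (hγd t)
  have hf1d : ∀ t ∈ D, HasDerivAt f1 (f2 t) t := by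
    intro t ht
    have hB : HasFDerivAt (fderiv ℝ L) (fderiv ℝ (fderiv ℝ L) (γ t)) (γ t) :=
      (((hsm _ (hDsub t ht).1).fderiv_right (m := (⊤ : ℕ∞)) (by simp)).differentiableAt (by simp)).hasFDerivAt
    have h1 : HasDerivAt (fun s => fderiv ℝ L (γ s)) (fderiv ℝ (fderiv ℝ L) (γ t) x) t :=
      hB.comp_hasDerivAt t (hγd t)
    exact (ContinuousLinearMap.apply ℝ ℝ x).hasFDerivAt.comp_hasDerivAt t h1
  have hfpos : ∀ t ∈ D, 0 < f t := fun t ht => hpos _ (hDsub t ht).1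
  set ψ : ℝ → ℝ := fun t => Real.sqrt (f t) with hψ
  have hψd : ∀ t ∈ D, HasDerivAt ψ (f1 t / (2 * Real.sqrt (f t))) t := by
    intro t ht
    exact (hfd t ht).sqrt (hfpos t ht).ne'
  -- second derivative positive on D
  have h2d : ∀ t ∈ D, 0 < deriv (deriv ψ) t := by
    intro t ht
    have hmem : D ∈ 𝓝 t := isOpen_Ioo.mem_nhds ht
    have hder_eq : deriv ψ =ᶠ[𝓝 t] fun s => f1 s / (2 * Real.sqrt (f s)) := by
      filter_upwards [hmem] with s hs using (hψd s hs).deriv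
    set st := Real.sqrt (f t) with hst
    have hst0 : 0 < st := Real.sqrt_pos.2 (hfpos t ht)
    have hst2 : st ^ 2 = f t := Real.sq_sqrt (hfpos t ht).le
    have hden : HasDerivAt (fun s => 2 * Real.sqrt (f s)) (2 * (f1 t / (2 * st))) t :=
      ((hfd t ht).sqrt (hfpos t ht).ne').const_mul 2
    have hquot : HasDerivAt (fun s => f1 s / (2 * Real.sqrt (f s)))
        ((f2 t * (2 * st) - f1 t * (2 * (f1 t / (2 * st)))) / (2 * st) ^ 2) t :=
      (hf1d t ht).div hden (by positivity)
    have : deriv (deriv ψ) t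
        = (f2 t * (2 * st) - f1 t * (2 * (f1 t / (2 * st)))) / (2 * st) ^ 2 := by
      rw [hder_eq.deriv_eq]; exact hquot.deriv
    rw [this]
    have hlt := (hDsub t ht).2
    have hnum : 0 < f2 t * (2 * st) - f1 t * (2 * (f1 t / (2 * st))) := by
      have he : f1 t * (2 * (f1 t / (2 * st))) = (f1 t) ^ 2 / st := by
        field_simp
      rw [he, sub_pos, div_lt_iff₀ hst0]
      have hprod : f2 t * (2 * st) * st = 2 * f2 t * f t := by rw [← hst2]; ring
      linarith
    positivity
  -- strict convexity of ψ on D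
  have hconv : StrictConvexOn ℝ D ψ := by
    apply strictConvexOn_of_deriv2_pos (convex_Ioo _ _)
    · intro t ht; exact ((hψd t ht).continuousAt).continuousWithinAt
    · intro t ht
      rw [isOpen_Ioo.interior_eq] at ht
      have hit : deriv^[2] ψ t = deriv (deriv ψ) t := by
        simp [Function.iterate_succ_apply']
      rw [hit]; exact h2d t ht
  -- ψ is also concave on D (restriction of √L along affine line)
  have hcav : ConcaveOn ℝ D ψ := by
    set aff : ℝ →ᵃ[ℝ] V := AffineMap.lineMap v (v + x) with haffdef
    have haff : ∀ t : ℝ, aff t = γ t := by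
      intro t
      simp [haffdef, AffineMap.lineMap_apply, hγ]
      abel
    have h1 : ConcaveOn ℝ (aff ⁻¹' A) ((fun w => Real.sqrt (L w)) ∘ aff) :=
      hconc.comp_affineMap aff
    have h2 : ψ = (fun w => Real.sqrt (L w)) ∘ aff := by
      funext t; simp [hψ, hf, Function.comp, haff t]
    rw [h2]
    refine h1.subset ?_ (convex_Ioo _ _)
    intro t ht
    simp only [mem_preimage, haff t]
    exact (hDsub t ht).1
  -- contradiction
  have hx1 : -(δ/2) ∈ D := by rw [hD, mem_Ioo]; constructor <;> linarith
  have hx2 : (δ/2) ∈ D := by rw [hD, mem_Ioo]; constructor <;> linarith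
  have hne : -(δ/2) ≠ (δ/2) := by intro h; linarith [hδ0]
  have half : (0:ℝ) < 1/2 := by norm_num
  have hsum : (1:ℝ)/2 + 1/2 = 1 := by norm_num
  have hlt := hconv.2 hx1 hx2 hne half half hsum
  have hge := hcav.2 hx1 hx2 half.le half.le hsum
  simp only [smul_eq_mul] at hlt hge
  linarith

private lemma euler_fderiv {V : Type} [NormedAddCommGroup V] [NormedSpace ℝ V]
    (Astar : Set V) (hAstar_open : IsOpen Astar)
    (hAstar_cone : ∀ v ∈ Astar, ∀ t : ℝ, 0 < t → t • v ∈ Astar)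
    (L : V → ℝ) (hsm : ∀ v ∈ Astar, ContDiffAt ℝ (⊤ : ℕ∞) L v)
    (hhom : ∀ v ∈ Astar, ∀ t : ℝ, 0 < t → L (t • v) = t ^ 2 * L v)
    {z : V} (hzA : z ∈ Astar) :
    fderiv ℝ (fderiv ℝ L) z z = fderiv ℝ L z := by
  -- Step 1: homogeneity of the derivative
  have hF : ∀ t : ℝ, 0 < t → fderiv ℝ L (t • z) = t • fderiv ℝ L z := by
    intro t ht
    have htz : t • z ∈ Astar := hAstar_cone z hzA t ht
    have hLtz : HasFDerivAt L (fderiv ℝ L (t • z)) (t • z) :=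
      ((hsm _ htz).differentiableAt (by simp)).hasFDerivAt
    have hm : HasFDerivAt (fun v : V => t • v) (t • ContinuousLinearMap.id ℝ V) z :=
      (t • ContinuousLinearMap.id ℝ V).hasFDerivAt
    have h1 : HasFDerivAt (fun v => L (t • v))
        ((fderiv ℝ L (t • z)).comp (t • ContinuousLinearMap.id ℝ V)) z := by
      have := hLtz.comp z (by simpa using hm)
      simpa [Function.comp_def] using this
    have h2 : (fun v => L (t • v)) =ᶠ[𝓝 z] fun v => t ^ 2 * L v := by
      filter_upwards [hAstar_open.mem_nhds hzA] with v hv using hhom v hv t ht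
    have h3 : HasFDerivAt (fun v => t ^ 2 * L v) ((t ^ 2) • fderiv ℝ L z) z :=
      ((hsm _ hzA).differentiableAt (by simp)).hasFDerivAt.const_mul (t ^ 2)
    have h4 : HasFDerivAt (fun v => t ^ 2 * L v)
        ((fderiv ℝ L (t • z)).comp (t • ContinuousLinearMap.id ℝ V)) z :=
      h1.congr_of_eventuallyEq h2.symm
    have h5 := h4.unique h3
    ext u
    have h6 := congrArg (fun (M : V →L[ℝ] ℝ) => M u) h5
    simp only [ContinuousLinearMap.coe_comp', Function.comp_apply,
      ContinuousLinearMap.smul_apply, ContinuousLinearMap.coe_smul',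
      ContinuousLinearMap.coe_id', Pi.smul_apply, id_eq, smul_eq_mul] at h6 ⊢
    have ht0 : t ≠ 0 := ht.ne'
    have : t * fderiv ℝ L (t • z) u = t ^ 2 * fderiv ℝ L z u := by
      rw [← h6]; rw [map_smul]; simp [smul_eq_mul]
    field_simp at this ⊢
    nlinarith [this]
  -- Step 2: differentiate t ↦ F (t • z) at t = 1
  have hd1 : HasDerivAt (fun t : ℝ => fderiv ℝ L (t • z)) (fderiv ℝ (fderiv ℝ L) z z) 1 := by
    have hFd : HasFDerivAt (fderiv ℝ L) (fderiv ℝ (fderiv ℝ L) z) z :=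
      (((hsm _ hzA).fderiv_right (m := (⊤ : ℕ∞)) (by simp)).differentiableAt (by simp)).hasFDerivAt
    have hcurve : HasDerivAt (fun t : ℝ => t • z) z 1 := by
      simpa using (hasDerivAt_id (1:ℝ)).smul_const z
    have hFd' : HasFDerivAt (fderiv ℝ L) (fderiv ℝ (fderiv ℝ L) z) ((1:ℝ) • z) := by
      rw [one_smul]; exact hFd
    simpa [Function.comp_def] using hFd'.comp_hasDerivAt (x := (1:ℝ)) hcurve
  have hd2 : HasDerivAt (fun t : ℝ => t • fderiv ℝ L z) (fderiv ℝ L z) 1 := by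
    simpa using (hasDerivAt_id (1:ℝ)).smul_const (fderiv ℝ L z)
  have hev : (fun t : ℝ => fderiv ℝ L (t • z)) =ᶠ[𝓝 (1:ℝ)] fun t => t • fderiv ℝ L z := by
    filter_upwards [isOpen_Ioi.mem_nhds (by norm_num : (0:ℝ) < 1)] with t ht using hF t ht
  exact (hd1.congr_of_eventuallyEq hev.symm).unique hd2


/-- The fundamental tensor of `L` at `v`: `g_v(u,w) = (1/2)·D²L(v)(u,w)`. -/
noncomputable def fundamentalTensor {V : Type} [NormedAddCommGroup V] [NormedSpace ℝ V]
    (L : V → ℝ) (v u w : V) : ℝ :=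
  (1 / 2) * iteratedFDeriv ℝ 2 L v ![u, w]

set_option maxHeartbeats 1000000 in
/-- Lemma 5.1: if `z` is a causal vector at which the fundamental tensor `g_z` is
nondegenerate and `W` is a spacelike subspace which is `g_z`-orthogonal to `z`, then the
restriction of `g_z` to `W` is nondegenerate; in fact it is negative definite. -/
theorem finsler_fundamental_tensor_spacelike_restriction
    {V : Type} [NormedAddCommGroup V] [NormedSpace ℝ V] [FiniteDimensional ℝ V]
    {n : ℕ} (hn : 2 ≤ n) (hdim : Module.finrank ℝ V = n)
    (A : Set V) (hA_open : IsOpen A) (hA_ne : A.Nonempty)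
    (hA0 : (0 : V) ∉ A) (hA_conv : Convex ℝ A)
    (hA_cone : ∀ v ∈ A, ∀ t : ℝ, 0 < t → t • v ∈ A)
    (hA_salient : ∀ v : V, v ∈ closure A → -v ∈ closure A → v = 0)
    (Astar : Set V) (hAstar_open : IsOpen Astar) (hAstar0 : (0 : V) ∉ Astar)
    (hAstar_cone : ∀ v ∈ Astar, ∀ t : ℝ, 0 < t → t • v ∈ Astar)
    (hAhat_sub : closure A \ {0} ⊆ Astar)
    (L : V → ℝ)
    (hL_smooth : ∀ v ∈ Astar, ContDiffAt ℝ (⊤ : ℕ∞) L v)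
    (hL_homog : ∀ v ∈ Astar, ∀ t : ℝ, 0 < t → L (t • v) = t ^ 2 * L v)
    (hL_pos : ∀ v ∈ A, 0 < L v)
    (hL_null : ∀ v ∈ closure A \ A, v ≠ 0 → L v = 0)
    (hL_conv : Convex ℝ {v ∈ A | 1 ≤ L v})
    (hg_nondeg : ∀ v ∈ closure A \ A, v ≠ 0 →
      ∀ u : V, (∀ w : V, fundamentalTensor L v u w = 0) → u = 0)
    (z : V) (hz : z ∈ closure A \ {0})
    (hz_nondeg : ∀ u : V, (∀ w : V, fundamentalTensor L z u w = 0) → u = 0)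
    (W : Submodule ℝ V)
    (hW_spacelike : ∀ w ∈ W, w ≠ 0 → w ∉ closure A ∧ -w ∉ closure A)
    (hW_orth : ∀ w ∈ W, fundamentalTensor L z z w = 0) :
    (∀ u ∈ W, (∀ w ∈ W, fundamentalTensor L z u w = 0) → u = 0) ∧
    (∀ w ∈ W, w ≠ 0 → fundamentalTensor L z w w < 0) := by
  have hzc : z ∈ closure A := hz.1
  have hz0 : z ≠ 0 := by simpa using hz.2
  have hzAstar : z ∈ Astar := hAhat_sub hz
  have hAsub : A ⊆ Astar := by
    intro v hv
    exact hAhat_sub ⟨subset_closure hv, by simp; rintro rfl; exact hA0 hv⟩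
  -- fundamental tensor in terms of the second derivative
  have hgB : ∀ u w : V, fundamentalTensor L z u w
      = (1 / 2) * (fderiv ℝ (fderiv ℝ L) z u w) := by
    intro u w
    rw [fundamentalTensor, iteratedFDeriv_two_apply]
    norm_num
  -- Euler identity
  have heuler : fderiv ℝ (fderiv ℝ L) z z = fderiv ℝ L z :=
    euler_fderiv Astar hAstar_open hAstar_cone L hL_smooth hL_homog hzAstar
  -- symmetry of the second derivative
  have hsymm : ∀ u w : V, fderiv ℝ (fderiv ℝ L) z u w = fderiv ℝ (fderiv ℝ L) z w u := by
    intro u w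
    refine second_derivative_symmetric_of_eventually (f := L) (f' := fderiv ℝ L) (x := z) ?_ ?_ u w
    · filter_upwards [hAstar_open.mem_nhds hzAstar] with y hy using
        ((hL_smooth y hy).differentiableAt (by simp)).hasFDerivAt
    · exact (((hL_smooth z hzAstar).fderiv_right (m := (⊤ : ℕ∞)) (by simp)).differentiableAt
        (by simp)).hasFDerivAt
  -- nondegeneracy restated
  have hnd : ∀ u : V, (∀ w : V, fderiv ℝ (fderiv ℝ L) z u w = 0) → u = 0 := by
    intro u hu
    exact hz_nondeg u (fun w => by rw [hgB, hu w, mul_zero])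
  -- the first derivative kills W
  have hFzW : ∀ w ∈ W, fderiv ℝ L z w = 0 := by
    intro w hw
    have h1 := hW_orth w hw
    rw [hgB] at h1
    have h2 : fderiv ℝ (fderiv ℝ L) z z w = 0 := by linarith
    rwa [heuler] at h2
  -- existence of a timelike y with nonzero pairing
  obtain ⟨y, hyA, hFzy⟩ : ∃ y ∈ A, fderiv ℝ L z y ≠ 0 := by
    by_contra h
    push_neg at h
    have hFz0 : ∀ u : V, fderiv ℝ L z u = 0 := by
      obtain ⟨a, ha⟩ := hA_ne
      intro u
      have hc : ContinuousAt (fun t : ℝ => a + t • u) 0 := by fun_prop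
      have hev : ∀ᶠ t in 𝓝 (0:ℝ), a + t • u ∈ A :=
        hc (by simpa using hA_open.mem_nhds ha)
      have hev2 : ∀ᶠ t in 𝓝[>] (0:ℝ), a + t • u ∈ A ∧ t ∈ Ioi (0:ℝ) :=
        (hev.filter_mono nhdsWithin_le_nhds).and self_mem_nhdsWithin
      obtain ⟨t, htA, ht0⟩ := hev2.exists
      have h1 := h _ htA
      have h2 := h _ ha
      rw [map_add, map_smul] at h1
      simp only [smul_eq_mul, h2, add_zero] at h1
      rcases mul_eq_zero.1 (by linarith : t * fderiv ℝ L z u = 0) with h3 | h3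
      · exact absurd h3 (ne_of_gt ht0)
      · exact h3
    exact hz0 (hnd z (fun w => by rw [heuler]; exact hFz0 w))
  -- √L is concave on A
  have hL_homogA : ∀ v ∈ A, ∀ t : ℝ, 0 < t → L (t • v) = t ^ 2 * L v :=
    fun v hv => hL_homog v (hAsub hv)
  have hconc := sqrtL_concave A hA_conv hA_cone L hL_homogA hL_pos hL_conv
  have hkey : ∀ v ∈ A, ∀ x : V,
      2 * (fderiv ℝ (fderiv ℝ L) v x x) * L v ≤ (fderiv ℝ L v x) ^ 2 :=
    fun v hv x => key_ineq A hA_open hA_conv L (fun u hu => hL_smooth u (hAsub hu))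
      hL_pos hconc hv x
  -- points z + s • y are timelike for s > 0
  have hvs : ∀ s : ℝ, 0 < s → z + s • y ∈ A := by
    intro s hs
    have h1s : (0:ℝ) < 1 + s := by linarith
    have hp : (s / (1 + s)) • y + (1 / (1 + s)) • z ∈ interior A :=
      hA_conv.combo_interior_closure_mem_interior
        (by rwa [hA_open.interior_eq]) hzc (by positivity) (by positivity)
        (by rw [← add_div, add_comm s 1, div_self h1s.ne'])
    rw [hA_open.interior_eq] at hp
    have h2 := hA_cone _ hp (1 + s) h1s
    have h3 : (1 + s) • ((s / (1 + s)) • y + (1 / (1 + s)) • z) = z + s • y := by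
      rw [smul_add, smul_smul, smul_smul]
      rw [mul_div_cancel₀ _ h1s.ne', mul_one_div_cancel h1s.ne', one_smul]
      abel
    rwa [h3] at h2
  -- continuity data at z
  have hFcont : ContinuousAt (fderiv ℝ L) z :=
    ((hL_smooth z hzAstar).fderiv_right (m := (⊤ : ℕ∞)) (by simp)).continuousAt
  have hBcont : ContinuousAt (fderiv ℝ (fderiv ℝ L)) z :=
    (((hL_smooth z hzAstar).fderiv_right (m := (⊤ : ℕ∞)) (by simp)).fderiv_right
      (m := (⊤ : ℕ∞)) (by simp)).continuousAt
  -- semidefiniteness on the kernel of dL(z)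
  have hsemi : ∀ u : V, fderiv ℝ L z u = 0 → fderiv ℝ (fderiv ℝ L) z u u ≤ 0 := by
    intro u hu
    set η : ℝ → V := fun s => z + s • y with hη
    have hη0 : η 0 = z := by simp [hη]
    have hηc : Continuous η := by fun_prop
    set c : ℝ → ℝ := fun s => fderiv ℝ L (η s) u / fderiv ℝ L (η s) y with hcdef
    set ξ : ℝ → V := fun s => u - c s • y with hξ
    set Φ : ℝ → ℝ := fun s => fderiv ℝ (fderiv ℝ L) (η s) (ξ s) (ξ s) with hΦ
    have hFη : ContinuousAt (fun s => fderiv ℝ L (η s)) 0 := by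
      have : ContinuousAt (fderiv ℝ L) (η 0) := by rwa [hη0]
      exact this.comp hηc.continuousAt
    have hFηu : ContinuousAt (fun s => fderiv ℝ L (η s) u) 0 :=
      contAt_clm_apply hFη continuousAt_const
    have hFηy : ContinuousAt (fun s => fderiv ℝ L (η s) y) 0 :=
      contAt_clm_apply hFη continuousAt_const
    have hFηy0 : fderiv ℝ L (η 0) y ≠ 0 := by rwa [hη0]
    have hcc : ContinuousAt c 0 := hFηu.div hFηy hFηy0
    have hξc : ContinuousAt ξ 0 := continuousAt_const.sub (hcc.smul continuousAt_const)
    have hBη : ContinuousAt (fun s => fderiv ℝ (fderiv ℝ L) (η s)) 0 := by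
      have : ContinuousAt (fderiv ℝ (fderiv ℝ L)) (η 0) := by rwa [hη0]
      exact this.comp hηc.continuousAt
    have hΦc : ContinuousAt Φ 0 :=
      contAt_clm_apply (contAt_clm_apply hBη hξc) hξc
    have hne : ∀ᶠ s in 𝓝 (0:ℝ), fderiv ℝ L (η s) y ≠ 0 :=
      hFηy.eventually_ne hFηy0
    have hΦle : ∀ᶠ s in 𝓝[>] (0:ℝ), Φ s ≤ 0 := by
      filter_upwards [hne.filter_mono nhdsWithin_le_nhds, self_mem_nhdsWithin]
        with s hsne hs
      have hsA : η s ∈ A := hvs s hs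
      have hFx : fderiv ℝ L (η s) (ξ s) = 0 := by
        rw [hξ]
        simp only [map_sub, map_smul, smul_eq_mul, hcdef]
        field_simp
        ring
      have h1 := hkey _ hsA (ξ s)
      rw [hFx] at h1
      have h2 := hL_pos _ hsA
      nlinarith [h1, h2]
    have hΦ0 : Φ 0 ≤ 0 :=
      le_of_tendsto (hΦc.continuousWithinAt.tendsto) hΦle
    have hc0 : c 0 = 0 := by
      rw [hcdef]; simp only [hη0, hu, zero_div]
    have : Φ 0 = fderiv ℝ (fderiv ℝ L) z u u := by
      rw [hΦ]; simp only [hξ, hc0, zero_smul, sub_zero, hη0]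
    linarith [hΦ0, this.symm.le, this.le]
  -- closure of A is a cone
  have hclos : ∀ t : ℝ, 0 < t → t • z ∈ closure A := by
    intro t ht
    exact Set.MapsTo.closure (fun v hv => hA_cone v hv t ht)
      (continuous_const_smul t) hzc
  -- negative definiteness
  have hneg : ∀ w ∈ W, w ≠ 0 → fundamentalTensor L z w w < 0 := by
    intro w hw hw0
    have hFzw := hFzW w hw
    have hle : fderiv ℝ (fderiv ℝ L) z w w ≤ 0 := hsemi w hFzw
    have hneq : fderiv ℝ (fderiv ℝ L) z w w ≠ 0 := by
      intro hBww
      -- Cauchy-Schwarz: w is in the radical over ker dL(z)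
      have horth : ∀ x : V, fderiv ℝ L z x = 0 → fderiv ℝ (fderiv ℝ L) z w x = 0 := by
        intro x hx
        have hq : ∀ t : ℝ, 2 * t * (fderiv ℝ (fderiv ℝ L) z w x)
            + t ^ 2 * (fderiv ℝ (fderiv ℝ L) z x x) ≤ 0 := by
          intro t
          have h1 : fderiv ℝ L z (w + t • x) = 0 := by
            rw [map_add, map_smul]; simp [hFzw, hx]
          have h2 := hsemi _ h1
          have hexp : fderiv ℝ (fderiv ℝ L) z (w + t • x) (w + t • x)
              = fderiv ℝ (fderiv ℝ L) z w w
                + t * (fderiv ℝ (fderiv ℝ L) z w x)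
                + t * (fderiv ℝ (fderiv ℝ L) z x w)
                + t ^ 2 * (fderiv ℝ (fderiv ℝ L) z x x) := by
            simp only [map_add, map_smul, ContinuousLinearMap.add_apply,
              ContinuousLinearMap.smul_apply, smul_eq_mul]
            ring
          rw [hexp, hBww, hsymm x w] at h2
          linarith
        have hb := hsemi x hx
        set a := fderiv ℝ (fderiv ℝ L) z w x with hadef
        set b := fderiv ℝ (fderiv ℝ L) z x x with hbdef
        rcases eq_or_lt_of_le hb with hb0 | hb'
        · have h1 := hq 1
          have h2 := hq (-1)
          rw [← hb0] at h1 h2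
          simp at h1 h2
          linarith
        · have ht := hq (-(a / b))
          have hb0 : b ≠ 0 := hb'.ne
          have he : 2 * (-(a / b)) * a + (-(a / b)) ^ 2 * b = -(a ^ 2 / b) := by
            field_simp; ring
          rw [he] at ht
          have h2 : 0 ≤ a ^ 2 / b := by linarith
          rcases div_nonneg_iff.mp h2 with ⟨_, hbge⟩ | ⟨hale, _⟩
          · exact absurd hbge (not_le.2 hb')
          · have h3 : a ^ 2 = 0 := le_antisymm hale (sq_nonneg a)
            exact pow_eq_zero_iff two_ne_zero |>.mp h3
      -- the linear form B z w is proportional to dL(z)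
      set cc := fderiv ℝ (fderiv ℝ L) z w y / fderiv ℝ L z y with hccdef
      have hall : ∀ x : V, fderiv ℝ (fderiv ℝ L) z w x = cc * fderiv ℝ L z x := by
        intro x
        have hker : fderiv ℝ L z (x - (fderiv ℝ L z x / fderiv ℝ L z y) • y) = 0 := by
          rw [map_sub, map_smul]
          simp only [smul_eq_mul]
          field_simp
          ring
        have h0 := horth _ hker
        rw [map_sub, map_smul] at h0
        simp only [smul_eq_mul] at h0
        have h1 : fderiv ℝ (fderiv ℝ L) z w x
            = (fderiv ℝ L z x / fderiv ℝ L z y) * fderiv ℝ (fderiv ℝ L) z w y := by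
          linarith
        rw [h1, hccdef]
        field_simp
      have hrad : ∀ x : V, fderiv ℝ (fderiv ℝ L) z (w - cc • z) x = 0 := by
        intro x
        rw [map_sub, map_smul]
        simp only [ContinuousLinearMap.sub_apply, ContinuousLinearMap.smul_apply,
          smul_eq_mul]
        rw [hall x, heuler]
        ring
      have hwc := hnd _ hrad
      have hwz : w = cc • z := sub_eq_zero.1 hwc
      have hcc0 : cc ≠ 0 := by
        intro h
        rw [h, zero_smul] at hwz
        exact hw0 hwz
      rcases lt_or_gt_of_ne hcc0 with hccn | hccp
      · have h1 := (hW_spacelike w hw hw0).2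
        apply h1
        rw [hwz, ← neg_smul]
        exact hclos (-cc) (by linarith)
      · have h1 := (hW_spacelike w hw hw0).1
        apply h1
        rw [hwz]
        exact hclos cc hccp
    rw [hgB]
    have : fderiv ℝ (fderiv ℝ L) z w w < 0 := lt_of_le_of_ne hle hneq
    linarith
  refine ⟨?_, hneg⟩
  intro u hu hOrth
  by_contra hu0
  have h1 := hneg u hu hu0
  have h2 := hOrth u hu
  linarith
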